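/- Define Φ : [0,1] → ℝ by Φ(x) = 4x² sin(π/(4x²)) for x ∈ (0,1/2], Φ(x) = −4(1−x)² sin(π/(4(1−x)²)) for x ∈ (1/2,1), and Φ(0) = Φ(1) = 0. For each k ∈ ℕ let I_k = [2^{−(k+1)}, 2^{−k}] and define Φ_{I_k} : [0,1] → ℝ by Φ_{I_k}(x) = Φ(2^{k+1}x − 1) for x ∈ I_k and Φ_{I_k}(x) = 0 otherwise. Then every nonzero finite linear combination F = Σ_k α_k Φ_{I_k} is differentiable at every point of [0,1], but its derivative F′ is not Lebesgue integrable on [0,1]. In particular, the functions Φ_{I_k} are linearly independent and span an infinite-dimensional space of everywhere differentiable functions whose nonzero elements are not absolutely continuous. -/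

import Mathlib

open Set MeasureTheory Filter Asymptotics

/-- `Φ(x) = 4x² sin(π/(4x²))` on `(0,1/2]`, `Φ(x) = −4(1−x)² sin(π/(4(1−x)²))` on
`(1/2,1)`, and `Φ = 0` at `0`, `1` (and outside `[0,1]`). -/
noncomputable def Phi (x : ℝ) : ℝ :=
  if x ≤ 0 then 0
  else if x ≤ 1 / 2 then 4 * x ^ 2 * Real.sin (Real.pi / (4 * x ^ 2))
  else if x < 1 then -(4 * (1 - x) ^ 2 * Real.sin (Real.pi / (4 * (1 - x) ^ 2)))
  else 0

/-- `Φ_{I_k}` where `I_k = [2^{-(k+1)}, 2^{-k}]`: it equals `Φ(2^{k+1}x − 1)` on `I_k`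
and `0` elsewhere. -/
noncomputable def PhiIk (k : ℕ) (x : ℝ) : ℝ :=
  if ((2 : ℝ) ^ (k + 1))⁻¹ ≤ x then
    if x ≤ ((2 : ℝ) ^ k)⁻¹ then Phi (2 ^ (k + 1) * x - 1) else 0
  else 0


noncomputable def gg (x : ℝ) : ℝ := 4 * x ^ 2 * Real.sin (Real.pi / (4 * x ^ 2))
noncomputable def hh (x : ℝ) : ℝ := -(gg (1 - x))

lemma hh_def (x : ℝ) : hh x = -(4 * (1 - x) ^ 2 * Real.sin (Real.pi / (4 * (1 - x) ^ 2))) := rfl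

lemma Phi_of_nonpos {x : ℝ} (h : x ≤ 0) : Phi x = 0 := if_pos h
lemma Phi_of_one_le {x : ℝ} (h : 1 ≤ x) : Phi x = 0 := by
  unfold Phi
  rw [if_neg (by linarith), if_neg (by linarith), if_neg (by linarith)]
lemma Phi_eq_gg {x : ℝ} (h1 : 0 < x) (h2 : x ≤ 1 / 2) : Phi x = gg x := by
  unfold Phi; rw [if_neg (by linarith), if_pos h2]; rfl
lemma Phi_eq_hh {x : ℝ} (h1 : 1 / 2 < x) (h2 : x < 1) : Phi x = hh x := by
  unfold Phi; rw [if_neg (by linarith), if_neg (by linarith), if_pos h2, hh_def]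

noncomputable def GG (x : ℝ) : ℝ :=
  4 * (2 * x) * Real.sin (Real.pi / (4 * x ^ 2)) +
    4 * x ^ 2 * (Real.cos (Real.pi / (4 * x ^ 2)) *
      ((0 * (4 * x ^ 2) - Real.pi * (4 * (2 * x))) / (4 * x ^ 2) ^ 2))

lemma hasDerivAt_gg {x : ℝ} (hx : x ≠ 0) : HasDerivAt gg (GG x) x := by
  have hne : 4 * x ^ 2 ≠ 0 := by positivity
  have hd : HasDerivAt (fun y : ℝ => 4 * y ^ 2) (4 * (2 * x)) x := by
    simpa using (hasDerivAt_pow 2 x).const_mul 4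
  have hu : HasDerivAt (fun y : ℝ => Real.pi / (4 * y ^ 2))
      ((0 * (4 * x ^ 2) - Real.pi * (4 * (2 * x))) / (4 * x ^ 2) ^ 2) x :=
    (hasDerivAt_const x Real.pi).div hd hne
  exact hd.mul hu.sin

lemma hasDerivAt_hh {x : ℝ} (hx : x ≠ 1) : HasDerivAt hh (GG (1 - x)) x := by
  have h1 : (1 : ℝ) - x ≠ 0 := by intro h; apply hx; linarith [sub_eq_zero.mp h]
  have inner : HasDerivAt (fun y : ℝ => 1 - y) (-1) x := by
    simpa using (hasDerivAt_id x).const_sub 1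
  have := ((hasDerivAt_gg h1).comp x inner).neg
  rw [show GG (1 - x) = -(GG (1 - x) * -1) by ring]
  exact this

lemma abs_Phi_le (x : ℝ) : |Phi x| ≤ 4 * x ^ 2 ∧ |Phi x| ≤ 4 * (1 - x) ^ 2 := by
  unfold Phi
  split_ifs with h1 h2 h3
  · constructor <;> simp <;> positivity
  · have hx : 0 < x := lt_of_not_ge h1
    have hs : |Real.sin (Real.pi / (4 * x ^ 2))| ≤ 1 := Real.abs_sin_le_one _
    have h4 : (0:ℝ) ≤ 4 * x ^ 2 := by positivity
    have : |4 * x ^ 2 * Real.sin (Real.pi / (4 * x ^ 2))| ≤ 4 * x ^ 2 := by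
      rw [abs_mul, abs_of_nonneg h4]
      nlinarith
    refine ⟨this, this.trans ?_⟩
    nlinarith
  · have hx : 1 / 2 < x := lt_of_not_ge h2
    have hs : |Real.sin (Real.pi / (4 * (1 - x) ^ 2))| ≤ 1 := Real.abs_sin_le_one _
    have h4 : (0:ℝ) ≤ 4 * (1 - x) ^ 2 := by positivity
    have : |(-(4 * (1 - x) ^ 2 * Real.sin (Real.pi / (4 * (1 - x) ^ 2))))| ≤ 4 * (1-x) ^ 2 := by
      rw [abs_neg, abs_mul, abs_of_nonneg h4]
      nlinarith
    refine ⟨this.trans ?_, this⟩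
    nlinarith
  · constructor <;> simp <;> positivity

lemma squeeze_deriv {f : ℝ → ℝ} {x₀ : ℝ} (h0 : f x₀ = 0)
    (h : ∀ᶠ y in nhds x₀, |f y| ≤ 4 * (y - x₀) ^ 2) : HasDerivAt f 0 x₀ := by
  rw [hasDerivAt_iff_isLittleO]
  simp only [h0, smul_zero, sub_zero]
  have h1 : (fun y => f y) =O[nhds x₀] fun y => (y - x₀) ^ 2 := by
    refine isBigO_iff.2 ⟨4, ?_⟩
    filter_upwards [h] with y hy
    simpa [abs_of_nonneg (sq_nonneg (y - x₀))] using hy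
  refine h1.trans_isLittleO ?_
  refine isLittleO_iff.2 fun c hc => ?_
  have : ∀ᶠ y in nhds x₀, |y - x₀| < c := by
    have ht : Tendsto (fun y : ℝ => |y - x₀|) (nhds x₀) (nhds 0) := by
      have hc2 : Continuous (fun y : ℝ => |y - x₀|) := (continuous_id.sub continuous_const).abs
      simpa using hc2.tendsto x₀
    exact ht.eventually_lt_const hc
  filter_upwards [this] with y hy
  have : |(y - x₀) ^ 2| = |y - x₀| * |y - x₀| := by
    rw [sq, abs_mul]
  rw [Real.norm_eq_abs, Real.norm_eq_abs, this]
  nlinarith [abs_nonneg (y - x₀)]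

lemma hasDerivAt_Phi_zero : HasDerivAt Phi 0 0 := by
  refine squeeze_deriv (by simp [Phi]) ?_
  filter_upwards with y
  simpa using (abs_Phi_le y).1

lemma hasDerivAt_Phi_one : HasDerivAt Phi 0 1 := by
  refine squeeze_deriv (by rw [Phi]; norm_num) ?_
  filter_upwards with y
  have := (abs_Phi_le y).2
  calc |Phi y| ≤ 4 * (1 - y) ^ 2 := this
    _ = 4 * (y - 1) ^ 2 := by ring

lemma Phi_half : Phi (1/2) = 0 := by
  rw [Phi_eq_gg (by norm_num) le_rfl]
  unfold gg
  norm_num [Real.sin_pi]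

lemma hasDerivAt_Phi_half : HasDerivAt Phi (GG (1/2)) (1/2) := by
  have hgg : Phi (1/2) = gg (1/2) := Phi_eq_gg (by norm_num) le_rfl
  have hhhalf : hh (1/2) = gg (1/2) := by
    have : Phi (1/2) = 0 := Phi_half
    unfold hh
    rw [hgg] at this
    norm_num [this]
  have left : HasDerivWithinAt Phi (GG (1/2)) (Iic (1/2)) (1/2) := by
    refine ((hasDerivAt_gg (by norm_num)).hasDerivWithinAt).congr_of_eventuallyEq ?_ hgg
    have hmem : Iic (1/2) ∩ Ioo (0:ℝ) 1 ∈ nhdsWithin (1/2 : ℝ) (Iic (1/2)) :=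
      inter_mem_nhdsWithin _ (Ioo_mem_nhds (by norm_num) (by norm_num))
    filter_upwards [hmem] with y hy
    exact Phi_eq_gg hy.2.1 hy.1
  have right : HasDerivWithinAt Phi (GG (1/2)) (Ici (1/2)) (1/2) := by
    have hd : HasDerivAt hh (GG (1/2)) (1/2) := by
      have := hasDerivAt_hh (x := 1/2) (by norm_num)
      norm_num at this ⊢
      exact this
    refine hd.hasDerivWithinAt.congr_of_eventuallyEq ?_ (by rw [hgg, hhhalf])
    have hmem : Ici (1/2) ∩ Ioo (0:ℝ) 1 ∈ nhdsWithin (1/2 : ℝ) (Ici (1/2)) :=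
      inter_mem_nhdsWithin _ (Ioo_mem_nhds (by norm_num) (by norm_num))
    filter_upwards [hmem] with y hy
    rcases eq_or_lt_of_le (show (1/2:ℝ) ≤ y from hy.1) with h | h
    · rw [← h, hgg, hhhalf]
    · exact Phi_eq_hh h hy.2.2
  have := left.union right
  rw [Iic_union_Ici] at this
  exact this.hasDerivAt (by simp)

lemma differentiableAt_Phi (x : ℝ) : DifferentiableAt ℝ Phi x := by
  rcases lt_trichotomy x 0 with hx | hx | hx
  · refine (hasDerivAt_const x (0:ℝ)).differentiableAt.congr_of_eventuallyEq ?_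
    filter_upwards [Iio_mem_nhds hx] with y hy
    exact Phi_of_nonpos (le_of_lt hy)
  · exact (hx ▸ hasDerivAt_Phi_zero).differentiableAt
  rcases lt_trichotomy x (1/2) with hx2 | hx2 | hx2
  · refine (hasDerivAt_gg (ne_of_gt hx)).differentiableAt.congr_of_eventuallyEq ?_
    filter_upwards [Ioo_mem_nhds hx hx2] with y hy
    exact Phi_eq_gg hy.1 (le_of_lt hy.2)
  · exact (hx2 ▸ hasDerivAt_Phi_half).differentiableAt
  rcases lt_trichotomy x 1 with hx3 | hx3 | hx3
  · refine (hasDerivAt_hh (ne_of_lt hx3)).differentiableAt.congr_of_eventuallyEq ?_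
    filter_upwards [Ioo_mem_nhds hx2 hx3] with y hy
    exact Phi_eq_hh hy.1 hy.2
  · exact (hx3 ▸ hasDerivAt_Phi_one).differentiableAt
  · refine (hasDerivAt_const x (0:ℝ)).differentiableAt.congr_of_eventuallyEq ?_
    filter_upwards [Ioi_mem_nhds hx3] with y hy
    exact Phi_of_one_le (le_of_lt hy)

lemma PhiIk_eq (k : ℕ) (x : ℝ) : PhiIk k x = Phi (2 ^ (k + 1) * x - 1) := by
  unfold PhiIk
  have hp : (0:ℝ) < 2 ^ (k+1) := by positivity
  split_ifs with h1 h2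
  · rfl
  · push_neg at h2
    rw [Phi_of_one_le]
    have hk : ((2:ℝ)^k)⁻¹ * 2 ^ (k+1) = 2 := by
      rw [pow_succ]; field_simp
    nlinarith [(inv_pos.mpr hp).le]
  · push_neg at h1
    rw [Phi_of_nonpos]
    have : 2 ^ (k+1) * x < 2 ^ (k+1) * ((2:ℝ) ^ (k+1))⁻¹ :=
      mul_lt_mul_of_pos_left h1 hp
    rw [mul_inv_cancel₀ (ne_of_gt hp)] at this
    linarith

noncomputable def pPt (m : ℕ) : ℝ := (Real.sqrt (4 * (m:ℝ) + 2))⁻¹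
noncomputable def uPt (m : ℕ) : ℝ := (2 * Real.sqrt (m:ℝ))⁻¹

lemma pPt_pos (m : ℕ) : 0 < pPt m := by
  unfold pPt
  have : (0:ℝ) < Real.sqrt (4 * (m:ℝ) + 2) := Real.sqrt_pos.mpr (by positivity)
  positivity
lemma pPt_sq (m : ℕ) : (pPt m) ^ 2 = (4 * (m:ℝ) + 2)⁻¹ := by
  unfold pPt
  rw [inv_pow, Real.sq_sqrt (by positivity)]
lemma uPt_pos {m : ℕ} (hm : 1 ≤ m) : 0 < uPt m := by
  unfold uPt
  have : (0:ℝ) < Real.sqrt (m:ℝ) := Real.sqrt_pos.mpr (by exact_mod_cast hm)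
  positivity
lemma uPt_sq (m : ℕ) : (uPt m) ^ 2 = (4 * (m:ℝ))⁻¹ := by
  unfold uPt
  rw [mul_inv, mul_pow, inv_pow, inv_pow, Real.sq_sqrt (by positivity), mul_inv]
  norm_num

lemma pPt_le_half {m : ℕ} (hm : 1 ≤ m) : pPt m ≤ 1 / 2 := by
  have h1 := pPt_sq m
  have h2 := pPt_pos m
  have hm' : (1:ℝ) ≤ m := by exact_mod_cast hm
  have h3 : (pPt m)^2 ≤ 1/4 := by
    rw [h1, inv_le_comm₀ (by positivity) (by norm_num)]
    linarith
  nlinarith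
lemma uPt_le_half {m : ℕ} (hm : 1 ≤ m) : uPt m ≤ 1 / 2 := by
  have h1 := uPt_sq m
  have h2 := uPt_pos hm
  have hm' : (1:ℝ) ≤ m := by exact_mod_cast hm
  have h3 : (uPt m)^2 ≤ 1/4 := by
    rw [h1, inv_le_comm₀ (by positivity) (by norm_num)]
    linarith
  nlinarith
lemma pPt_lt_uPt {m : ℕ} (hm : 1 ≤ m) : pPt m < uPt m := by
  have h1 := pPt_sq m; have h2 := uPt_sq m
  have h3 := pPt_pos m; have h4 := uPt_pos hm
  have hm' : (1:ℝ) ≤ m := by exact_mod_cast hm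
  have h5 : (pPt m)^2 < (uPt m)^2 := by
    rw [h1, h2]
    apply inv_strictAnti₀ (by positivity)
    linarith
  nlinarith
lemma uPt_lt_pPt {m₁ m₂ : ℕ} (h : m₁ < m₂) : uPt m₂ < pPt m₁ := by
  have h1 := pPt_sq m₁; have h2 := uPt_sq m₂
  have h3 := pPt_pos m₁
  have hm2 : 1 ≤ m₂ := by omega
  have h4 := uPt_pos hm2
  have hm' : (m₁:ℝ) + 1 ≤ m₂ := by exact_mod_cast h
  have h5 : (uPt m₂)^2 < (pPt m₁)^2 := by
    rw [h1, h2]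
    apply inv_strictAnti₀ (by positivity)
    linarith
  nlinarith

lemma Phi_uPt {m : ℕ} (hm : 1 ≤ m) : Phi (uPt m) = 0 := by
  rw [Phi_eq_gg (uPt_pos hm) (uPt_le_half hm)]
  unfold gg
  rw [uPt_sq]
  have hm0 : ((m:ℝ)) ≠ 0 := by positivity
  have harg : Real.pi / (4 * ((4:ℝ) * m)⁻¹) = m * Real.pi := by
    field_simp
  rw [harg, Real.sin_nat_mul_pi, mul_zero]

lemma abs_Phi_pPt {m : ℕ} (hm : 1 ≤ m) : |Phi (pPt m)| = 2 / (2 * m + 1) := by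
  rw [Phi_eq_gg (pPt_pos m) (pPt_le_half hm)]
  unfold gg
  rw [pPt_sq]
  have h0 : ((4:ℝ) * m + 2) ≠ 0 := by positivity
  have harg : Real.pi / (4 * ((4:ℝ) * m + 2)⁻¹) = m * Real.pi + Real.pi / 2 := by
    field_simp; ring
  rw [harg, Real.sin_add_pi_div_two, abs_mul]
  have habs : |Real.cos ((m:ℝ) * Real.pi)| = 1 := by
    have := Real.abs_cos_int_mul_pi (m : ℤ)
    push_cast at this
    exact this
  rw [habs, mul_one, abs_of_nonneg (by positivity)]
  field_simp
  ring

lemma two_pow_pos (k : ℕ) : (0:ℝ) < 2 ^ (k+1) := by positivity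

lemma arg_eq (k : ℕ) (t : ℝ) : 2 ^ (k + 1) * ((1 + t) / 2 ^ (k + 1)) - 1 = t := by
  field_simp
  ring

lemma PhiIk_eval_ne {j k : ℕ} (hjk : j ≠ k) {t : ℝ} (ht : 0 < t) (ht1 : t < 1) :
    PhiIk j ((1 + t) / 2 ^ (k + 1)) = 0 := by
  rw [PhiIk_eq]
  have hkp := two_pow_pos k
  have hjp := two_pow_pos j
  rcases lt_or_gt_of_ne hjk with h | h
  · rw [Phi_of_nonpos]
    have hle : (2:ℝ) ^ (j+1) * 2 ≤ 2 ^ (k+1) := by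
      rw [← pow_succ]
      exact pow_le_pow_right₀ one_le_two (by omega)
    rw [mul_div_assoc'] at *
    rw [sub_nonpos, div_le_one hkp]
    nlinarith
  · rw [Phi_of_one_le]
    have hle : (2:ℝ) ^ (k+1) * 2 ≤ 2 ^ (j+1) := by
      rw [← pow_succ]
      exact pow_le_pow_right₀ one_le_two (by omega)
    rw [mul_div_assoc']
    rw [le_sub_iff_add_le, le_div_iff₀ hkp]
    nlinarith

lemma sum_eval (s : Finset ℕ) (α : ℕ → ℝ) {k : ℕ} (hk : k ∈ s) {t : ℝ}
    (ht : 0 < t) (ht1 : t < 1) :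
    ∑ j ∈ s, α j * PhiIk j ((1 + t) / 2 ^ (k + 1)) = α k * Phi t := by
  rw [Finset.sum_eq_single_of_mem k hk]
  · rw [PhiIk_eq, arg_eq]
  · intro j _ hj
    rw [PhiIk_eval_ne hj ht ht1, mul_zero]

lemma Phi_pPt_ne (m : ℕ) (hm : 1 ≤ m) : Phi (pPt m) ≠ 0 := by
  intro h
  have := abs_Phi_pPt hm
  rw [h, abs_zero] at this
  have hm' : (0:ℝ) ≤ m := by positivity
  have : (0:ℝ) < 2 / (2*m+1) := by positivity
  linarith [this]

lemma linIndep : LinearIndependent ℝ (fun k : ℕ => (PhiIk k : ℝ → ℝ)) := by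
  rw [linearIndependent_iff']
  intro s g hsum i hi
  have := congrFun hsum ((1 + pPt 1) / 2 ^ (i + 1))
  rw [Finset.sum_apply] at this
  simp only [Pi.smul_apply, smul_eq_mul, Pi.zero_apply] at this
  rw [sum_eval s g hi (pPt_pos 1) (lt_of_le_of_lt (pPt_le_half le_rfl) (by norm_num))] at this
  exact (mul_eq_zero.mp this).resolve_right (Phi_pPt_ne 1 le_rfl)

/-- The `Φ_{I_k}` are linearly independent, and every nonzero finite linear combination
`F = Σ α_k Φ_{I_k}` is differentiable at every point of `[0,1]` (one-sidedly at the
endpoints), while any derivative `F'` of `F` on `[0,1]` fails to be Lebesgue integrable. -/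
theorem stmt16 :
    LinearIndependent ℝ (fun k : ℕ => (PhiIk k : ℝ → ℝ)) ∧
    ∀ (s : Finset ℕ) (α : ℕ → ℝ), (∃ k ∈ s, α k ≠ 0) →
      (∀ x ∈ Set.Icc (0 : ℝ) 1,
        DifferentiableWithinAt ℝ (fun y => ∑ k ∈ s, α k * PhiIk k y) (Set.Icc 0 1) x) ∧
      ∀ F' : ℝ → ℝ,
        (∀ x ∈ Set.Icc (0 : ℝ) 1,
          HasDerivWithinAt (fun y => ∑ k ∈ s, α k * PhiIk k y) (F' x) (Set.Icc 0 1) x) →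
        ¬ MeasureTheory.IntegrableOn F' (Set.Icc 0 1) := by
  refine ⟨linIndep, fun s α hne => ?_⟩
  have hFdiff : Differentiable ℝ (fun y => ∑ k ∈ s, α k * PhiIk k y) := by
    have heq : (fun y => ∑ k ∈ s, α k * PhiIk k y)
        = fun y => ∑ k ∈ s, α k * Phi (2 ^ (k+1) * y - 1) := by
      funext y; simp only [PhiIk_eq]
    rw [heq]
    apply Differentiable.fun_sum
    intro j _
    apply Differentiable.const_mul
    exact fun x => (differentiableAt_Phi _).comp x
      (((differentiable_id.const_mul ((2:ℝ)^(j+1))).sub_const 1) x)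
  refine ⟨fun x _ => (hFdiff x).differentiableWithinAt, ?_⟩
  intro F' hF' hInt
  obtain ⟨k, hk, hαk⟩ := hne
  set F : ℝ → ℝ := fun y => ∑ j ∈ s, α j * PhiIk j y with hF
  set c := |α k| with hc
  have hcpos : 0 < c := abs_pos.mpr hαk
  set a : ℕ → ℝ := fun m => (1 + pPt (m+1)) / 2 ^ (k+1) with ha
  set b : ℕ → ℝ := fun m => (1 + uPt (m+1)) / 2 ^ (k+1) with hb
  have hkp := two_pow_pos k
  have h2 : (2:ℝ) ≤ 2 ^ (k+1) := by
    calc (2:ℝ) = 2 ^ 1 := (pow_one 2).symm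
    _ ≤ 2 ^ (k+1) := pow_le_pow_right₀ one_le_two (by omega)
  have hm1 : ∀ m : ℕ, 1 ≤ m + 1 := fun m => Nat.le_add_left 1 m
  have hab : ∀ m, a m < b m := by
    intro m
    show (1 + pPt (m+1)) / 2 ^ (k+1) < (1 + uPt (m+1)) / 2 ^ (k+1)
    gcongr
    exact pPt_lt_uPt (hm1 m)
  have ha0 : ∀ m, 0 < a m := fun m => div_pos (by linarith [pPt_pos (m+1)]) hkp
  have hb1 : ∀ m, b m < 1 := by
    intro m
    show (1 + uPt (m+1)) / 2 ^ (k+1) < 1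
    rw [div_lt_one hkp]
    linarith [uPt_le_half (hm1 m)]
  -- key estimate per m
  have key : ∀ m : ℕ, c * (2 / (2 * (m:ℝ) + 3)) ≤ ∫ x in Ioc (a m) (b m), |F' x| := by
    intro m
    have hsub : uIcc (a m) (b m) ⊆ Icc (0:ℝ) 1 := by
      rw [uIcc_of_le (hab m).le]
      intro x hx
      exact ⟨(ha0 m).le.trans hx.1, hx.2.trans (hb1 m).le⟩
    have hder : ∀ x ∈ uIcc (a m) (b m), HasDerivAt F (F' x) x := by
      intro x hx
      rw [uIcc_of_le (hab m).le] at hx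
      have hx01 : x ∈ Ioo (0:ℝ) 1 := ⟨lt_of_lt_of_le (ha0 m) hx.1, lt_of_le_of_lt hx.2 (hb1 m)⟩
      exact (hF' x ⟨hx01.1.le, hx01.2.le⟩).hasDerivAt (Icc_mem_nhds hx01.1 hx01.2)
    have hint : IntervalIntegrable F' volume (a m) (b m) :=
      (hInt.mono_set hsub).intervalIntegrable
    have hftc := intervalIntegral.integral_eq_sub_of_hasDerivAt hder hint
    have hFb : F (b m) = 0 := by
      show ∑ j ∈ s, α j * PhiIk j ((1 + uPt (m+1)) / 2 ^ (k+1)) = 0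
      rw [sum_eval s α hk (uPt_pos (hm1 m))
        (lt_of_le_of_lt (uPt_le_half (hm1 m)) (by norm_num)), Phi_uPt (hm1 m), mul_zero]
    have hFa : F (a m) = α k * Phi (pPt (m+1)) := by
      show ∑ j ∈ s, α j * PhiIk j ((1 + pPt (m+1)) / 2 ^ (k+1)) = α k * Phi (pPt (m+1))
      exact sum_eval s α hk (pPt_pos (m+1))
        (lt_of_le_of_lt (pPt_le_half (hm1 m)) (by norm_num))
    have hval : |F (b m) - F (a m)| = c * (2 / (2 * ((m+1:ℕ):ℝ) + 1)) := by
      rw [hFb, hFa, zero_sub, abs_neg, abs_mul, abs_Phi_pPt (hm1 m), hc]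
    calc c * (2 / (2 * (m:ℝ) + 3)) = |F (b m) - F (a m)| := by
          rw [hval]; push_cast; ring_nf
      _ = |∫ x in (a m)..(b m), F' x| := by rw [hftc]
      _ ≤ ∫ x in (a m)..(b m), |F' x| := intervalIntegral.abs_integral_le_integral_abs (hab m).le
      _ = ∫ x in Ioc (a m) (b m), |F' x| := intervalIntegral.integral_of_le (hab m).le
  -- summing over disjoint intervals
  have habs_int : IntegrableOn (fun x => |F' x|) (Icc (0:ℝ) 1) := hInt.abs
  have hJsub : ∀ m, Ioc (a m) (b m) ⊆ Icc (0:ℝ) 1 := by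
    intro m x hx
    exact ⟨(ha0 m).le.trans hx.1.le, hx.2.trans (hb1 m).le⟩
  have hbound : ∀ M : ℕ, ∑ m ∈ Finset.range M, c * (2 / (2 * (m:ℝ) + 3))
      ≤ ∫ x in Icc (0:ℝ) 1, |F' x| := by
    intro M
    have hcase : ∀ {i j : ℕ}, i < j → min (b i) (b j) ≤ max (a i) (a j) := by
      intro i j h
      have hba : b j ≤ a i := by
        show (1 + uPt (j+1)) / 2 ^ (k+1) ≤ (1 + pPt (i+1)) / 2 ^ (k+1)
        gcongr
        exact (uPt_lt_pPt (by omega)).le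
      exact le_trans (min_le_right _ _) (hba.trans (le_max_left _ _))
    have hdisj : Set.Pairwise ↑(Finset.range M) (Function.onFun Disjoint fun m => Ioc (a m) (b m)) := by
      intro i _ j _ hij
      rw [Function.onFun, Set.Ioc_disjoint_Ioc]
      rcases lt_or_gt_of_ne hij with h | h
      · exact hcase h
      · rw [min_comm, max_comm]
        exact hcase h
    calc ∑ m ∈ Finset.range M, c * (2 / (2 * (m:ℝ) + 3))
        ≤ ∑ m ∈ Finset.range M, ∫ x in Ioc (a m) (b m), |F' x| :=
          Finset.sum_le_sum (fun m _ => key m)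
      _ = ∫ x in ⋃ m ∈ Finset.range M, Ioc (a m) (b m), |F' x| :=
          (integral_biUnion_finset _ (fun i _ => measurableSet_Ioc) hdisj
            (fun i _ => habs_int.mono_set (hJsub i))).symm
      _ ≤ ∫ x in Icc (0:ℝ) 1, |F' x| := by
          apply setIntegral_mono_set habs_int
          · exact Filter.Eventually.of_forall (fun x => abs_nonneg _)
          · exact HasSubset.Subset.eventuallyLE (Set.iUnion₂_subset fun i _ => hJsub i)
  -- divergence
  have hterm : ∀ m : ℕ, (c/2) * (1 / ((m:ℝ) + 1)) ≤ c * (2 / (2 * (m:ℝ) + 3)) := by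
    intro m
    have hm : (0:ℝ) ≤ m := Nat.cast_nonneg m
    have h1 : (1:ℝ)/2 * (1/((m:ℝ)+1)) ≤ 2 / (2 * (m:ℝ) + 3) := by
      have e : (1:ℝ)/2 * (1/((m:ℝ)+1)) = 1 / (2*((m:ℝ)+1)) := by
        rw [div_mul_div_comm, one_mul]
      rw [e, div_le_div_iff₀ (by positivity) (by positivity)]
      linarith
    calc (c/2) * (1 / ((m:ℝ) + 1)) = c * ((1:ℝ)/2 * (1/((m:ℝ)+1))) := by ring
      _ ≤ c * (2 / (2 * (m:ℝ) + 3)) := by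
          exact mul_le_mul_of_nonneg_left h1 hcpos.le
  have hdiv : Tendsto (fun M => ∑ m ∈ Finset.range M, c * (2 / (2 * (m:ℝ) + 3)))
      atTop atTop := by
    apply tendsto_atTop_mono
      (f := fun M => ∑ m ∈ Finset.range M, (c/2) * (1 / ((m:ℝ) + 1)))
    · intro M
      exact Finset.sum_le_sum (fun m _ => hterm m)
    · have hH := Real.tendsto_sum_range_one_div_nat_succ_atTop
      have := hH.const_mul_atTop (show (0:ℝ) < c/2 by positivity)
      refine this.congr (fun M => ?_)
      rw [Finset.mul_sum]
  obtain ⟨M, hM⟩ := (hdiv.eventually_gt_atTop (∫ x in Icc (0:ℝ) 1, |F' x|)).exists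
  exact absurd (hbound M) (not_le.mpr hM)
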